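/- Let X ⊆ ℝⁿ be a nonempty compact subset, let T be a metric space, let c ≥ 0, and let f : X × T → ℝ be continuous and such that for every t ∈ T the map x ↦ f(x, t) is c-Lipschitz on X, with the constant c not depending on t. Define F : ℝⁿ × T → ℝ by F(z, t) = sup_{x ∈ X} (f(x, t) − c·‖x − z‖). Then F is continuous on ℝⁿ × T, F(x, t) = f(x, t) for all (x, t) ∈ X × T, and for every t ∈ T the map z ↦ F(z, t) is c-Lipschitz on ℝⁿ. -/

import Mathlib

/-!
For fixed `x` and `t`, `z ↦ f (x, t) - c‖x - z‖` is a cone of slope `c` with apex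
`(x, f (x, t))`; the `c`-Lipschitz bound keeps every such cone below `f (·, t)` on `X`, so at
`z ∈ X` the supremum is attained by the cone with apex `z`. A supremum of `c`-Lipschitz
functions is `c`-Lipschitz, and a supremum over a compact set of a jointly continuous family
is continuous.
-/

open Set

theorem IsCompact.continuous_sSup_of_continuousOn {α β γ : Type*}
    [ConditionallyCompleteLinearOrder α] [TopologicalSpace α] [OrderTopology α]
    [TopologicalSpace β] [TopologicalSpace γ] {f : γ → β → α} {K : Set β} (hK : IsCompact K)
    (hf : ContinuousOn ↿f (univ ×ˢ K)) : Continuous fun x => sSup (f x '' K) := by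
  have : CompactSpace K := isCompact_iff_compactSpace.mp hK
  have hf' : Continuous fun p : γ × K => f p.1 p.2 :=
    hf.comp_continuous (f := fun p : γ × K => (p.1, (p.2 : β))) (by fun_prop)
      fun p => ⟨mem_univ _, p.2.2⟩
  simp only [image_eq_range]
  simpa only [image_univ] using
    isCompact_univ.continuous_sSup (f := fun x (y : K) => f x y) hf'

section SupOfImage

variable {ι : Type*} {g h : ι → ℝ} {X : Set ι} {d : ℝ}

theorem csSup_image_le_csSup_image_add (hX : X.Nonempty) (hh : BddAbove (h '' X))
    (hd : ∀ x ∈ X, g x ≤ h x + d) : sSup (g '' X) ≤ sSup (h '' X) + d := by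
  refine csSup_le (hX.image g) ?_
  rintro _ ⟨x, hx, rfl⟩
  exact (hd x hx).trans (add_le_add_left (le_csSup hh ⟨x, hx, rfl⟩) d)

theorem abs_csSup_image_sub_csSup_image_le (hX : X.Nonempty) (hg : BddAbove (g '' X))
    (hh : BddAbove (h '' X)) (hd : ∀ x ∈ X, |g x - h x| ≤ d) :
    |sSup (g '' X) - sSup (h '' X)| ≤ d := by
  rw [abs_sub_le_iff, sub_le_iff_le_add', sub_le_iff_le_add']
  constructor
  · exact csSup_image_le_csSup_image_add hX hh fun x hx => by
      linarith [(abs_sub_le_iff.mp (hd x hx)).1]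
  · exact csSup_image_le_csSup_image_add hX hg fun x hx => by
      linarith [(abs_sub_le_iff.mp (hd x hx)).2]

end SupOfImage

section McShane

variable {E : Type*} [SeminormedAddCommGroup E] {X : Set E} {c : ℝ} {f : E → ℝ}

noncomputable def mcshaneExtension (X : Set E) (c : ℝ) (f : E → ℝ) (z : E) : ℝ :=
  sSup ((fun x => f x - c * ‖x - z‖) '' X)

theorem mcshaneExtension_eq_of_mem (hf : ∀ x ∈ X, ∀ y ∈ X, |f x - f y| ≤ c * ‖x - y‖)
    {z : E} (hz : z ∈ X) : mcshaneExtension X c f z = f z := by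
  refine IsGreatest.csSup_eq ⟨⟨z, hz, by simp⟩, ?_⟩
  rintro _ ⟨x, hx, rfl⟩
  linarith [(abs_sub_le_iff.mp (hf x hx z hz)).1]

theorem bddAbove_image_sub_mul_norm_sub (hc : 0 ≤ c) (hf : BddAbove (f '' X)) (z : E) :
    BddAbove ((fun x => f x - c * ‖x - z‖) '' X) := by
  obtain ⟨M, hM⟩ := hf
  refine ⟨M, ?_⟩
  rintro _ ⟨x, hx, rfl⟩
  exact (sub_le_self _ (mul_nonneg hc (norm_nonneg _))).trans (hM ⟨x, hx, rfl⟩)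

theorem abs_mcshaneExtension_sub_le (hX : X.Nonempty) (hc : 0 ≤ c) (hf : BddAbove (f '' X))
    (z w : E) : |mcshaneExtension X c f z - mcshaneExtension X c f w| ≤ c * ‖z - w‖ := by
  refine abs_csSup_image_sub_csSup_image_le hX (bddAbove_image_sub_mul_norm_sub hc hf z)
    (bddAbove_image_sub_mul_norm_sub hc hf w) fun x _ => ?_
  have hcone : |‖x - w‖ - ‖x - z‖| ≤ ‖z - w‖ := by
    simpa only [sub_sub_sub_cancel_left] using abs_norm_sub_norm_le (x - w) (x - z)
  rw [show f x - c * ‖x - z‖ - (f x - c * ‖x - w‖) = c * (‖x - w‖ - ‖x - z‖) by ring,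
    abs_mul, abs_of_nonneg hc]
  exact mul_le_mul_of_nonneg_left hcone hc

theorem continuous_mcshaneExtension_of_continuousOn {T : Type*} [TopologicalSpace T]
    (hX : IsCompact X) (c : ℝ) {f : E × T → ℝ} (hf : ContinuousOn f (X ×ˢ univ)) :
    Continuous fun zt : E × T => mcshaneExtension X c (fun x => f (x, zt.2)) zt.1 := by
  refine hX.continuous_sSup_of_continuousOn (ContinuousOn.sub ?_ (by fun_prop))
  exact hf.comp (by fun_prop) fun p hp => ⟨hp.2, mem_univ _⟩

end McShane

/-- **Parametrized McShane extension.** Let `X ⊆ ℝⁿ` be a nonempty compact set, `T` a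
metric space, `c ≥ 0`, and `f : X × T → ℝ` continuous and `c`-Lipschitz in the first
variable, uniformly in `t ∈ T`. Then
`F (z, t) = sup_{x ∈ X} (f (x, t) - c·‖x - z‖)` is continuous on `ℝⁿ × T`, agrees with
`f` on `X × T`, and for every `t` the map `z ↦ F (z, t)` is `c`-Lipschitz on `ℝⁿ`. -/
theorem mcshane_extension_with_parameters {n : ℕ} {T : Type*} [MetricSpace T]
    (X : Set (EuclideanSpace ℝ (Fin n))) (hX : X.Nonempty) (hXc : IsCompact X)
    (c : ℝ) (hc : 0 ≤ c) (f : EuclideanSpace ℝ (Fin n) × T → ℝ)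
    (hfcont : ContinuousOn f (X ×ˢ (Set.univ : Set T)))
    (hflip : ∀ t : T, ∀ x ∈ X, ∀ y ∈ X, |f (x, t) - f (y, t)| ≤ c * ‖x - y‖) :
    Continuous (fun zt : EuclideanSpace ℝ (Fin n) × T =>
      sSup ((fun x : EuclideanSpace ℝ (Fin n) => f (x, zt.2) - c * ‖x - zt.1‖) '' X)) ∧
    (∀ x ∈ X, ∀ t : T,
      sSup ((fun x' : EuclideanSpace ℝ (Fin n) => f (x', t) - c * ‖x' - x‖) '' X) =
        f (x, t)) ∧
    (∀ t : T, ∀ z w : EuclideanSpace ℝ (Fin n),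
      |sSup ((fun x : EuclideanSpace ℝ (Fin n) => f (x, t) - c * ‖x - z‖) '' X) -
        sSup ((fun x : EuclideanSpace ℝ (Fin n) => f (x, t) - c * ‖x - w‖) '' X)| ≤
        c * ‖z - w‖) := by
  have hbdd (t : T) : BddAbove ((fun x => f (x, t)) '' X) :=
    hXc.bddAbove_image (hfcont.comp (by fun_prop) fun x hx => ⟨hx, mem_univ t⟩)
  exact ⟨continuous_mcshaneExtension_of_continuousOn hXc c hfcont,
    fun x hx t => mcshaneExtension_eq_of_mem (hflip t) hx,
    fun t => abs_mcshaneExtension_sub_le hX hc (hbdd t)⟩
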